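/- arXiv:1110.1998 — 5 statements merged into one kernel-verified Lean document; each statement's English description precedes it below -/
import Mathlib

section
/- In the setting of the previous decomposition: if C_{r+1} = 0 then the restriction of g to ker b is nondegenerate (its kernel is zero); if C_{r+1} ≠ 0 and θ = g(p,·) for a g-isotropic vector p ∈ Eᵣ (g(p,p) = 0, p ≠ 0), then the kernel of g restricted to ker b × ker b equals ℝ·p. -/
/-!
Write `x = (x_i)_i` blockwise. Pairing `x` with a vector supported on a single block `j ≠ r`
isolates the term `C_j g_j(x_j, ·)`: if `C_j ≠ 0` this vanishes for `x ∈ ker b`, and if `C_j = 0`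
the whole block `E_j` lies in `ker b`, so `g_j(x_j, ·)` vanishes for `x` in the `g`-kernel of
`ker b`; either way nondegeneracy of `g_j` forces `x_j = 0`. When `C_{r+1} = 0` the same argument
applies to the last block. Otherwise `ker θ ⊆ E_r` lies in `ker b`, so `g_r(x_r, ·)` vanishes on
`ker θ` and is therefore a multiple of `θ = g_r(p, ·)`, i.e. `x_r ∈ ℝ p`. Conversely `p ∈ ker b`
because `p` is isotropic, and `g(p, y) = θ(y_r) = 0` for `y ∈ ker b` since `b(y, y_r) = c θ(y_r)²`.
-/

open LinearMap in
theorem LinearMap.exists_eq_smul_of_ker_le {K V : Type*} [Field K] [AddCommGroup V] [Module K V]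
    {φ ψ : V →ₗ[K] K} (h : ker φ ≤ ker ψ) : ∃ t : K, ψ = t • φ := by
  have hψ := mem_span_of_iInf_ker_le_ker (L := fun _ : Unit => φ) (K := ψ) (by simpa using h)
  rw [Set.range_const, Submodule.mem_span_singleton] at hψ
  obtain ⟨t, rfl⟩ := hψ
  exact ⟨t, rfl⟩

theorem LinearMap.exists_eq_smul_of_forall_apply_eq_zero {K V : Type*} [Field K] [AddCommGroup V]
    [Module K V] {g : V →ₗ[K] V →ₗ[K] K} (hg : ∀ x, (∀ y, g x y = 0) → x = 0) {p x : V}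
    (h : ∀ w, g p w = 0 → g x w = 0) : ∃ t : K, x = t • p := by
  obtain ⟨t, ht⟩ := exists_eq_smul_of_ker_le (φ := g p) (ψ := g x) h
  refine ⟨t, sub_eq_zero.1 (hg _ fun y => ?_)⟩
  simp [ht]

theorem Fintype.sum_apply_pi_single {ι M : Type*} [Fintype ι] [DecidableEq ι] {W : ι → Type*}
    [∀ i, Zero (W i)] [AddCommMonoid M] (f : ∀ i, W i → M) (hf : ∀ i, f i 0 = 0) (j : ι)
    (v : W j) : ∑ i, f i (Pi.single j v i) = f j v := by
  rw [Fintype.sum_eq_single j fun i hi => by rw [Pi.single_eq_of_ne hi, hf], Pi.single_eq_same]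

theorem Pi.eq_single_of_forall_ne {ι : Type*} [DecidableEq ι] {W : ι → Type*} [∀ i, Zero (W i)]
    {x : ∀ i, W i} {o : ι} (hx : ∀ j, j ≠ o → x j = 0) : x = Pi.single o (x o) := by
  funext j
  by_cases hj : j = o
  · subst hj; rw [Pi.single_eq_same]
  · rw [hx j hj, Pi.single_eq_of_ne hj]

section BlockForm

variable {K ι : Type*} [Field K] [Fintype ι] [DecidableEq ι] {W : ι → Type*}
  [∀ i, AddCommGroup (W i)] [∀ i, Module K (W i)] (g : ∀ i, W i →ₗ[K] W i →ₗ[K] K) {o : ι}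

def sumForm (x y : ∀ i, W i) : K := ∑ i, g i (x i) (y i)

def blockForm (C : ι → K) (c : K) (θ : W o →ₗ[K] K) (x y : ∀ i, W i) : K :=
  (∑ i, C i * g i (x i) (y i)) + c * θ (x o) * θ (y o)

variable {g}

theorem sumForm_single_right (x : ∀ i, W i) (j : ι) (v : W j) :
    sumForm g x (Pi.single j v) = g j (x j) v :=
  Fintype.sum_apply_pi_single (fun i => g i (x i)) (fun _ => map_zero _) j v

theorem sumForm_single_left (j : ι) (v : W j) (y : ∀ i, W i) :
    sumForm g (Pi.single j v) y = g j v (y j) :=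
  Fintype.sum_apply_pi_single (fun i w => g i w (y i)) (fun _ => by simp) j v

variable {C : ι → K} {c : K} {θ : W o →ₗ[K] K}

theorem blockForm_single_right (x : ∀ i, W i) (j : ι) (v : W j) :
    blockForm g C c θ x (Pi.single j v) =
      C j * g j (x j) v + c * θ (x o) * θ (Pi.single j v o) := by
  rw [blockForm, Fintype.sum_apply_pi_single (fun i w => C i * g i (x i) w) (by simp)]

theorem blockForm_single_left (j : ι) (v : W j) (y : ∀ i, W i) :
    blockForm g C c θ (Pi.single j v) y =
      C j * g j v (y j) + c * θ (Pi.single j v o) * θ (y o) := by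
  rw [blockForm, Fintype.sum_apply_pi_single (fun i w => C i * g i w (y i)) (by simp)]

theorem component_eq_zero_of_mem_radical (hg : ∀ i, ∀ x : W i, (∀ y, g i x y = 0) → x = 0)
    {j : ι} (hj : j ≠ o ∨ c = 0) {x : ∀ i, W i} (hx : ∀ y, blockForm g C c θ x y = 0)
    (hxG : ∀ y, (∀ z, blockForm g C c θ y z = 0) → sumForm g x y = 0) : x j = 0 := by
  have hθ (v : W j) : c * θ (Pi.single j v o) = 0 := by
    rcases hj with hj | rfl
    · rw [Pi.single_eq_of_ne' hj, map_zero, mul_zero]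
    · rw [zero_mul]
  refine hg j _ fun v => ?_
  by_cases hCj : C j = 0
  · rw [← sumForm_single_right]
    refine hxG _ fun z => ?_
    rw [blockForm_single_left, hCj, hθ, zero_mul, zero_mul, zero_add]
  · have := hx (Pi.single j v)
    rw [blockForm_single_right, mul_right_comm, hθ, zero_mul, add_zero] at this
    exact (mul_eq_zero.1 this).resolve_left hCj

theorem mem_radical_iff_eq_smul_single (hg : ∀ i, ∀ x : W i, (∀ y, g i x y = 0) → x = 0)
    (hC : C o = 0) (hc : c ≠ 0) {p : W o} (hp0 : g o p p = 0) (x : ∀ i, W i) :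
    ((∀ y, blockForm g C c (g o p) x y = 0) ∧
        (∀ y, (∀ z, blockForm g C c (g o p) y z = 0) → sumForm g x y = 0)) ↔
      ∃ t : K, x = t • Pi.single o p := by
  have single_mem_ker {w : W o} (hw : g o p w = 0) (z : ∀ i, W i) :
      blockForm g C c (g o p) (Pi.single o w) z = 0 := by
    rw [blockForm_single_left, Pi.single_eq_same, hC, hw]; ring
  constructor
  · rintro ⟨hx, hxG⟩
    have hx_single : x = Pi.single o (x o) := Pi.eq_single_of_forall_ne fun j hj =>
      component_eq_zero_of_mem_radical hg (Or.inl hj) hx hxG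
    obtain ⟨t, ht⟩ := LinearMap.exists_eq_smul_of_forall_apply_eq_zero (hg o) fun w hw => by
      rw [← sumForm_single_right]; exact hxG _ (single_mem_ker hw)
    exact ⟨t, by rw [hx_single, ht, Pi.single_smul]⟩
  · rintro ⟨t, rfl⟩
    rw [← Pi.single_smul]
    refine ⟨single_mem_ker (by rw [map_smul, hp0, smul_zero]), fun y hy => ?_⟩
    have hθy : g o p (y o) = 0 := by
      have := hy (Pi.single o (y o))
      rw [blockForm_single_right, hC, Pi.single_eq_same, zero_mul, zero_add] at this
      simpa [hc] using this
    rw [sumForm_single_left, map_smul, LinearMap.smul_apply, hθy, smul_zero]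

end BlockForm

theorem stmt3_general {r : ℕ} (W : Fin (r + 1) → Type*)
    [∀ i, AddCommGroup (W i)] [∀ i, Module ℝ (W i)]
    (g : ∀ i, W i →ₗ[ℝ] W i →ₗ[ℝ] ℝ)
    (hg_nondeg : ∀ i, ∀ x : W i, (∀ y : W i, g i x y = 0) → x = 0)
    (p : W (Fin.last r)) (hp0 : g (Fin.last r) p p = 0)
    (θ : W (Fin.last r) →ₗ[ℝ] ℝ) (hθ : θ = g (Fin.last r) p)
    (C : Fin (r + 1) → ℝ) (hC : C (Fin.last r) = 0) (c : ℝ)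
    (b G : (∀ i, W i) → (∀ i, W i) → ℝ)
    (hb : ∀ x y, b x y =
      (∑ i, C i * g i (x i) (y i)) + c * θ (x (Fin.last r)) * θ (y (Fin.last r)))
    (hG : ∀ x y, G x y = ∑ i, g i (x i) (y i)) :
    (c = 0 → ∀ x : ∀ i, W i, (∀ y, b x y = 0) →
      (∀ y, (∀ z, b y z = 0) → G x y = 0) → x = 0) ∧
    (c ≠ 0 → ∀ x : ∀ i, W i,
      ((∀ y, b x y = 0) ∧ (∀ y, (∀ z, b y z = 0) → G x y = 0)) ↔
        ∃ t : ℝ, x = t • Pi.single (Fin.last r) p) := by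
  obtain rfl : b = blockForm g C c θ := funext₂ hb
  obtain rfl : G = sumForm g := funext₂ hG
  subst hθ
  exact ⟨fun hc x hx hxG => funext fun j =>
      component_eq_zero_of_mem_radical hg_nondeg (Or.inr hc) hx hxG,
    fun hc => mem_radical_iff_eq_smul_single hg_nondeg hC hc hp0⟩

/-- In the setting of the previous decomposition (blocks `W i`, `i : Fin (r+1)`,
with `g i` positive definite for `i ≠ last` and `g last` a nondegenerate Lorentzian-type form;
`p` a nonzero isotropic vector of the last block; `θ = g last p`; coefficients `C` with
`C last = 0` and `c`; `b = Σ C i · g i + c·θ⊗θ`; `G = Σ g i` the total form):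
if `c = 0` then the restriction of `G` to `ker b` is nondegenerate; if `c ≠ 0` then the
kernel of `G` restricted to `ker b × ker b` equals `ℝ·p`. -/
theorem stmt3 {r : ℕ} (W : Fin (r + 1) → Type*)
    [∀ i, AddCommGroup (W i)] [∀ i, Module ℝ (W i)]
    [FiniteDimensional ℝ (W (Fin.last r))]
    (g : ∀ i, W i →ₗ[ℝ] W i →ₗ[ℝ] ℝ)
    (hg_symm : ∀ i, ∀ x y : W i, g i x y = g i y x)
    (hg_nondeg : ∀ i, ∀ x : W i, (∀ y : W i, g i x y = 0) → x = 0)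
    (hg_pos : ∀ i, i ≠ Fin.last r → ∀ x : W i, x ≠ 0 → 0 < g i x x)
    (p : W (Fin.last r)) (hp : p ≠ 0) (hp0 : g (Fin.last r) p p = 0)
    (θ : W (Fin.last r) →ₗ[ℝ] ℝ) (hθ : θ = g (Fin.last r) p)
    (C : Fin (r + 1) → ℝ) (hC : C (Fin.last r) = 0) (c : ℝ)
    (b G : (∀ i, W i) → (∀ i, W i) → ℝ)
    (hb : ∀ x y, b x y =
      (∑ i, C i * g i (x i) (y i)) + c * θ (x (Fin.last r)) * θ (y (Fin.last r)))
    (hG : ∀ x y, G x y = ∑ i, g i (x i) (y i)) :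
    (c = 0 → ∀ x : ∀ i, W i, (∀ y, b x y = 0) →
      (∀ y, (∀ z, b y z = 0) → G x y = 0) → x = 0) ∧
    (c ≠ 0 → ∀ x : ∀ i, W i,
      ((∀ y, b x y = 0) ∧ (∀ y, (∀ z, b y z = 0) → G x y = 0)) ↔
        ∃ t : ℝ, x = t • Pi.single (Fin.last r) p) :=
  stmt3_general W g hg_nondeg p hp0 θ hθ C hC c b G hb hG
end

section
/- Let P ∈ 𝒫(𝔰𝔬(n)), i.e. P : ℝⁿ → 𝔰𝔬(n) linear with g(P(X)Y,Z) + g(P(Y)Z,X) + g(P(Z)X,Y) = 0 for all X,Y,Z, and suppose n = 2m and P takes values in 𝔲(m) ⊆ 𝔰𝔬(2m). Then g(R̃ic(P), X) = i·tr_ℂ P(JX) for all X ∈ ℝⁿ. -/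
open scoped InnerProductSpace BigOperators
open Finset

section StmtAux
variable {V : Type*} [NormedAddCommGroup V] [InnerProductSpace ℂ V]

private lemma gsymm' (u v : V) : (⟪u,v⟫_ℂ).re = (⟪v,u⟫_ℂ).re := by
  rw [← inner_conj_symm u v]; exact Complex.conj_re _

private lemma rsl' (r : ℝ) (u v : V) : ⟪r • u, v⟫_ℂ = (r:ℂ) * ⟪u,v⟫_ℂ := by
  rw [← algebraMap_smul ℂ r u, inner_smul_left]; simp

private lemma imL' (u v : V) : (⟪u,v⟫_ℂ).im = (⟪Complex.I • u, v⟫_ℂ).re := by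
  rw [inner_smul_left, Complex.conj_I]; simp

private lemma imR' (u v : V) : (⟪u,v⟫_ℂ).im = -(⟪u, Complex.I • v⟫_ℂ).re := by
  rw [inner_smul_right]; simp

private lemma II' (u v : V) : ⟪Complex.I • u, Complex.I • v⟫_ℂ = ⟪u,v⟫_ℂ := by
  rw [inner_smul_left, inner_smul_right, Complex.conj_I]; ring_nf
  rw [Complex.I_sq]; ring

private lemma Jmove' (u v : V) : (⟪u, Complex.I • v⟫_ℂ).re = -(⟪Complex.I • u, v⟫_ℂ).re := by
  rw [inner_smul_left, inner_smul_right, Complex.conj_I]; simp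

variable {n : ℕ} (b : Module.Basis (Fin n) ℝ V)

private lemma repr_eq' (hON : ∀ i j, (⟪b i, b j⟫_ℂ).re = if i = j then 1 else 0)
    (u : V) (j : Fin n) : (⟪u, b j⟫_ℂ).re = b.repr u j := by
  conv_lhs => rw [← b.sum_repr u]
  rw [sum_inner, Complex.re_sum]
  rw [Finset.sum_congr rfl (fun i _ => by rw [rsl']; simp [hON i j] : ∀ i ∈ univ,
    (⟪b.repr u i • b i, b j⟫_ℂ).re = if i = j then b.repr u i else 0)]
  simp

private lemma pars' (hON : ∀ i j, (⟪b i, b j⟫_ℂ).re = if i = j then 1 else 0) (u v : V) :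
    ∑ j, (⟪u, b j⟫_ℂ).re * (⟪b j, v⟫_ℂ).re = (⟪u,v⟫_ℂ).re := by
  conv_rhs => rw [← b.sum_repr u]
  rw [sum_inner, Complex.re_sum]
  refine Finset.sum_congr rfl fun j _ => ?_
  rw [repr_eq' b hON, rsl']; simp

private lemma cpars' (hON : ∀ i j, (⟪b i, b j⟫_ℂ).re = if i = j then 1 else 0) (u v : V) :
    ∑ k, ⟪u, b k⟫_ℂ * ⟪b k, v⟫_ℂ = 2 * ⟪u,v⟫_ℂ := by
  apply Complex.ext
  · rw [Complex.re_sum]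
    have e1 : ∀ k ∈ univ, (⟪u, b k⟫_ℂ * ⟪b k, v⟫_ℂ).re
        = (⟪u, b k⟫_ℂ).re * (⟪b k, v⟫_ℂ).re
          + (⟪Complex.I • u, b k⟫_ℂ).re * (⟪b k, Complex.I • v⟫_ℂ).re := by
      intro k _
      rw [Complex.mul_re, ← imL' u (b k)]
      have : (⟪b k, v⟫_ℂ).im = -(⟪b k, Complex.I • v⟫_ℂ).re := imR' _ _
      rw [this]; ring
    rw [Finset.sum_congr rfl e1, Finset.sum_add_distrib, pars' b hON u v,
      pars' b hON (Complex.I • u) (Complex.I • v)]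
    have := II' u v
    rw [this, Complex.mul_re]
    simp; ring
  · rw [Complex.im_sum]
    have e1 : ∀ k ∈ univ, (⟪u, b k⟫_ℂ * ⟪b k, v⟫_ℂ).im
        = -((⟪u, b k⟫_ℂ).re * (⟪b k, Complex.I • v⟫_ℂ).re)
          + (⟪Complex.I • u, b k⟫_ℂ).re * (⟪b k, v⟫_ℂ).re := by
      intro k _
      rw [Complex.mul_im, ← imL' u (b k), imR' (b k) v]
      ring
    rw [Finset.sum_congr rfl e1, Finset.sum_add_distrib, Finset.sum_neg_distrib,
      pars' b hON u (Complex.I • v), pars' b hON (Complex.I • u) v]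
    have h1 := Jmove' u v
    have h2 := imL' u v
    rw [Complex.mul_im]
    norm_num
    linarith

private lemma trace_formula' [FiniteDimensional ℂ V]
    (hON : ∀ i j, (⟪b i, b j⟫_ℂ).re = if i = j then 1 else 0)
    (A : V →ₗ[ℂ] V) (hA : ∀ x y : V, ⟪A x, y⟫_ℂ + ⟪x, A y⟫_ℂ = 0) :
    ∑ k, ⟪b k, A (b k)⟫_ℂ = 2 * LinearMap.trace ℂ V A := by
  classical
  set f := stdOrthonormalBasis ℂ V with hf
  have htr : LinearMap.trace ℂ V A = ∑ j, ⟪f j, A (f j)⟫_ℂ := by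
    rw [LinearMap.trace_eq_matrix_trace ℂ f.toBasis, Matrix.trace]
    simp [Matrix.diag, LinearMap.toMatrix_apply, OrthonormalBasis.coe_toBasis_repr_apply,
      OrthonormalBasis.repr_apply_apply]
  have hsk : ∀ x y : V, ⟪x, A y⟫_ℂ = -⟪A x, y⟫_ℂ := fun x y => by
    linear_combination hA x y
  calc ∑ k, ⟪b k, A (b k)⟫_ℂ
      = ∑ k, ∑ j, ⟪b k, f j⟫_ℂ * ⟪f j, A (b k)⟫_ℂ := by
        exact sum_congr rfl fun k _ => (f.sum_inner_mul_inner _ _).symm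
    _ = ∑ j, ∑ k, -(⟪A (f j), b k⟫_ℂ * ⟪b k, f j⟫_ℂ) := by
        rw [Finset.sum_comm]
        refine sum_congr rfl fun j _ => sum_congr rfl fun k _ => ?_
        rw [hsk (f j) (b k)]; ring
    _ = ∑ j, -(2 * ⟪A (f j), f j⟫_ℂ) := by
        refine sum_congr rfl fun j _ => ?_
        rw [Finset.sum_neg_distrib, cpars' b hON]
    _ = ∑ j, 2 * ⟪f j, A (f j)⟫_ℂ := by
        refine sum_congr rfl fun j _ => ?_
        linear_combination (-2 : ℂ) * hA (f j) (f j)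
    _ = 2 * LinearMap.trace ℂ V A := by rw [htr, Finset.mul_sum]

end StmtAux

/-- Let `P ∈ 𝒫(𝔲(m))`, i.e. `P` is a real-linear map from `ℝ^{2m} ≅ ℂᵐ` to
`𝔲(m)` (complex-linear skew-Hermitian endomorphisms) satisfying the cyclic identity
`g(P(X)Y,Z) + g(P(Y)Z,X) + g(P(Z)X,Y) = 0` for the real inner product `g = Re ⟪·,·⟫_ℂ`.
Then for all `X`, `g(R̃ic(P), X) = i · tr_ℂ P(JX)`, where `R̃ic(P) = Σ_k P(eₖ)eₖ` over a
`g`-orthonormal real basis `(eₖ)` and `J` is the complex structure. -/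
theorem stmt12 {V : Type*} [NormedAddCommGroup V] [InnerProductSpace ℂ V]
    [FiniteDimensional ℂ V] {m : ℕ}
    (b : Module.Basis (Fin (2 * m)) ℝ V)
    (hON : ∀ i j, (⟪b i, b j⟫_ℂ).re = if i = j then 1 else 0)
    (P : V → (V →ₗ[ℂ] V))
    (hadd : ∀ x y : V, P (x + y) = P x + P y)
    (hsmul : ∀ (r : ℝ) (x y : V), P (r • x) y = r • P x y)
    (hskew : ∀ v x y : V, ⟪P v x, y⟫_ℂ + ⟪x, P v y⟫_ℂ = 0)
    (hcyc : ∀ x y z : V,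
      (⟪P x y, z⟫_ℂ).re + (⟪P y z, x⟫_ℂ).re + (⟪P z x, y⟫_ℂ).re = 0) :
    ∀ X : V,
      (((⟪∑ k, P (b k) (b k), X⟫_ℂ).re : ℝ) : ℂ)
        = Complex.I * LinearMap.trace ℂ V (P (Complex.I • X)) := by
  intro X
  classical
  -- expansion of P in its first argument
  have hPmap : ∀ v y : V, P v y = ∑ j, b.repr v j • P (b j) y := by
    intro v y
    have h0 : P (∑ j, b.repr v j • b j) = ∑ j, P (b.repr v j • b j) :=
      map_sum (AddMonoidHom.mk' P hadd) (fun j => b.repr v j • b j) Finset.univ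
    conv_lhs => rw [← b.sum_repr v]
    rw [h0, LinearMap.sum_apply]
    exact sum_congr rfl fun j _ => hsmul _ _ _
  -- expansion of P in its second argument
  have hPy : ∀ v y : V, P v y = ∑ l, b.repr y l • P v (b l) := by
    intro v y
    conv_lhs => rw [← b.sum_repr y, map_sum]
    exact sum_congr rfl fun l _ => (P v).map_smul_of_tower _ _
  -- coefficients of I • b k
  have hr : ∀ k j, b.repr (Complex.I • b k) j = -(⟪Complex.I • b j, b k⟫_ℂ).re := by
    intro k j
    rw [← repr_eq' b hON, gsymm', Jmove']
  -- basis independence of the Ricci sum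
  have hbasis : ∑ k, P (Complex.I • b k) (Complex.I • b k) = ∑ k, P (b k) (b k) := by
    calc ∑ k, P (Complex.I • b k) (Complex.I • b k)
        = ∑ k, ∑ j, ∑ l,
            (b.repr (Complex.I • b k) j * b.repr (Complex.I • b k) l) • P (b j) (b l) := by
          refine sum_congr rfl fun k _ => ?_
          rw [hPmap (Complex.I • b k) (Complex.I • b k)]
          refine sum_congr rfl fun j _ => ?_
          rw [hPy (b j) (Complex.I • b k), Finset.smul_sum]
          exact sum_congr rfl fun l _ => smul_smul _ _ _
      _ = ∑ j, ∑ l,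
            (∑ k, b.repr (Complex.I • b k) j * b.repr (Complex.I • b k) l) • P (b j) (b l) := by
          rw [Finset.sum_comm]
          refine sum_congr rfl fun j _ => ?_
          rw [Finset.sum_comm]
          exact sum_congr rfl fun l _ => (Finset.sum_smul).symm
      _ = ∑ j, ∑ l, (if j = l then (1:ℝ) else 0) • P (b j) (b l) := by
          refine sum_congr rfl fun j _ => sum_congr rfl fun l _ => ?_
          congr 1
          have e1 : ∀ k ∈ univ, b.repr (Complex.I • b k) j * b.repr (Complex.I • b k) l
              = (⟪Complex.I • b j, b k⟫_ℂ).re * (⟪b k, Complex.I • b l⟫_ℂ).re := by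
            intro k _
            rw [hr, hr, gsymm' (Complex.I • b l) (b k)]
            ring
          rw [Finset.sum_congr rfl e1, pars' b hON, II', hON]
      _ = ∑ k, P (b k) (b k) := by
          refine sum_congr rfl fun j _ => ?_
          simp only [ite_smul, one_smul, zero_smul]
          simp
  -- skew symmetry of c in the last two arguments
  have cskew : ∀ v y z : V, (⟪P v y, z⟫_ℂ).re = -(⟪P v z, y⟫_ℂ).re := by
    intro v y z
    have h := congrArg Complex.re (hskew v y z)
    simp only [Complex.add_re, Complex.zero_re] at h
    have h2 := gsymm' y (P v z)
    linarith
  -- J-invariance of c in the last two arguments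
  have hJinv : ∀ x y z : V,
      (⟪P x (Complex.I • y), Complex.I • z⟫_ℂ).re = (⟪P x y, z⟫_ℂ).re := by
    intro x y z
    rw [map_smul, II']
  -- I • I • x = -x
  have hII : ∀ x : V, Complex.I • Complex.I • x = -x := by
    intro x
    rw [smul_smul, Complex.I_mul_I, neg_one_smul]
  -- second Bianchi term
  have hterm2 : ∀ k, (⟪P (Complex.I • b k) (Complex.I • X), b k⟫_ℂ).re
      = (⟪P (Complex.I • b k) (Complex.I • b k), X⟫_ℂ).re := by
    intro k
    have h1 : (⟪P (Complex.I • b k) (b k), Complex.I • X⟫_ℂ).re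
        = -(⟪P (Complex.I • b k) (Complex.I • b k), X⟫_ℂ).re := by
      have h2 := hJinv (Complex.I • b k) (b k) (Complex.I • X)
      rw [hII X] at h2
      rw [← h2, inner_neg_right]
      simp
      exact (imL' _ _).symm
    have h3 := cskew (Complex.I • b k) (Complex.I • X) (b k)
    rw [h3, h1]; ring
  -- Bianchi identity per k
  have hbk : ∀ k, (⟪P (b k) (b k), X⟫_ℂ).re
        + (⟪P (Complex.I • b k) (Complex.I • b k), X⟫_ℂ).re
      = -(⟪P (Complex.I • X) (b k), Complex.I • b k⟫_ℂ).re := by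
    intro k
    have h := hcyc (b k) (Complex.I • b k) (Complex.I • X)
    have h1 : (⟪P (b k) (Complex.I • b k), Complex.I • X⟫_ℂ).re
        = (⟪P (b k) (b k), X⟫_ℂ).re := hJinv _ _ _
    have h2 := hterm2 k
    linarith
  -- summed geometric identity: 2 G = ∑ₖ -(⟪I•bk, A bk⟫).re
  have hsumG : 2 * (⟪∑ k, P (b k) (b k), X⟫_ℂ).re
      = ∑ k, -(⟪Complex.I • b k, P (Complex.I • X) (b k)⟫_ℂ).re := by
    have hG1 : (⟪∑ k, P (b k) (b k), X⟫_ℂ).re = ∑ k, (⟪P (b k) (b k), X⟫_ℂ).re := by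
      rw [sum_inner, Complex.re_sum]
    have hG2 : (⟪∑ k, P (b k) (b k), X⟫_ℂ).re
        = ∑ k, (⟪P (Complex.I • b k) (Complex.I • b k), X⟫_ℂ).re := by
      rw [← hbasis, sum_inner, Complex.re_sum]
    have hS : ∑ k, ((⟪P (b k) (b k), X⟫_ℂ).re
          + (⟪P (Complex.I • b k) (Complex.I • b k), X⟫_ℂ).re)
        = ∑ k, -(⟪P (Complex.I • X) (b k), Complex.I • b k⟫_ℂ).re :=
      sum_congr rfl fun k _ => hbk k
    rw [Finset.sum_add_distrib] at hS
    have hswap : ∀ k ∈ univ, -(⟪P (Complex.I • X) (b k), Complex.I • b k⟫_ℂ).re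
        = -(⟪Complex.I • b k, P (Complex.I • X) (b k)⟫_ℂ).re := fun k _ => by
      rw [gsymm']
    rw [Finset.sum_congr rfl hswap] at hS
    linarith [hG1, hG2, hS]
  -- trace side
  have hA : ∀ x y : V, ⟪P (Complex.I • X) x, y⟫_ℂ + ⟪x, P (Complex.I • X) y⟫_ℂ = 0 :=
    hskew _
  have htr := trace_formula' b hON (P (Complex.I • X)) hA
  have hz : ∀ k, Complex.I * ⟪b k, P (Complex.I • X) (b k)⟫_ℂ
      = ((-(⟪Complex.I • b k, P (Complex.I • X) (b k)⟫_ℂ).re : ℝ) : ℂ) := by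
    intro k
    have h0 : (⟪b k, P (Complex.I • X) (b k)⟫_ℂ).re = 0 := by
      have h := congrArg Complex.re (hskew (Complex.I • X) (b k) (b k))
      simp only [Complex.add_re, Complex.zero_re] at h
      have h2 := gsymm' (b k) (P (Complex.I • X) (b k))
      linarith
    have h1 := imL' (b k) (P (Complex.I • X) (b k))
    apply Complex.ext
    · rw [Complex.mul_re]
      simp only [Complex.I_re, Complex.I_im, Complex.ofReal_re, zero_mul, one_mul, zero_sub]
      rw [h1]
    · rw [Complex.mul_im]
      simp only [Complex.I_re, Complex.I_im, Complex.ofReal_im, zero_mul, one_mul, add_zero, h0]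
  have h2T : (2:ℂ) * (Complex.I * LinearMap.trace ℂ V (P (Complex.I • X)))
      = ((2 * (⟪∑ k, P (b k) (b k), X⟫_ℂ).re : ℝ) : ℂ) := by
    calc (2:ℂ) * (Complex.I * LinearMap.trace ℂ V (P (Complex.I • X)))
        = Complex.I * (2 * LinearMap.trace ℂ V (P (Complex.I • X))) := by ring
      _ = Complex.I * ∑ k, ⟪b k, P (Complex.I • X) (b k)⟫_ℂ := by rw [htr]
      _ = ∑ k, Complex.I * ⟪b k, P (Complex.I • X) (b k)⟫_ℂ := Finset.mul_sum _ _ _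
      _ = ∑ k, ((-(⟪Complex.I • b k, P (Complex.I • X) (b k)⟫_ℂ).re : ℝ) : ℂ) :=
          sum_congr rfl fun k _ => hz k
      _ = ((∑ k, -(⟪Complex.I • b k, P (Complex.I • X) (b k)⟫_ℂ).re : ℝ) : ℂ) := by
          rw [Complex.ofReal_sum]
      _ = ((2 * (⟪∑ k, P (b k) (b k), X⟫_ℂ).re : ℝ) : ℂ) := by rw [← hsumG]
  have h3 : (2:ℂ) * (((⟪∑ k, P (b k) (b k), X⟫_ℂ).re : ℝ) : ℂ)
      = (2:ℂ) * (Complex.I * LinearMap.trace ℂ V (P (Complex.I • X))) := by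
    rw [h2T]; push_cast; ring
  exact mul_left_cancel₀ two_ne_zero h3
end

section
/- Let 𝔤 = 𝔤^{1,𝔥} = (ℝ ⊕ 𝔥) ⋉ ℝⁿ ⊆ 𝔰𝔦𝔪(n) with 𝔥 ⊆ 𝔰𝔬(n). Given λ ∈ ℝ, e ∈ ℝⁿ, R₀ : Λ²ℝⁿ → 𝔥 a linear map satisfying the first Bianchi identity, P ∈ 𝒫(𝔥), and T a symmetric bilinear form on ℝⁿ identified with an endomorphism, define R : Λ²ℝ^{1,n+1} → 𝔤 by R(p,q) = (λ,0,e), R(X,Y) = (0, R₀(X,Y), P(Y)X − P(X)Y), R(X,q) = (g(e,X), P(X), T(X)), R(p,X) = 0 for X,Y ∈ E = ℝⁿ. Then R satisfies the first Bianchi identity: R(U,V)W + R(V,W)U + R(W,U)V = 0 for all U,V,W ∈ ℝ^{1,n+1}. -/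
open scoped RealInnerProductSpace BigOperators

noncomputable section

/-- The endomorphism of `ℝ^{1,n+1} = ℝ × ℝⁿ × ℝ` (coordinates `(v_p, v_E, v_q)` in the Witt
basis `p, X₁, …, Xₙ, q`) corresponding to the matrix `(a, A, X) ∈ 𝔰𝔦𝔪(n)` of the paper:
`p ↦ a·p`, `Y ↦ g(X,Y)·p + A·Y` for `Y ∈ E`, `q ↦ −X − a·q`. -/
def simMat (n : ℕ) (a : ℝ) (A : EuclideanSpace ℝ (Fin n) →ₗ[ℝ] EuclideanSpace ℝ (Fin n))
    (Xv : EuclideanSpace ℝ (Fin n)) :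
    (ℝ × EuclideanSpace ℝ (Fin n) × ℝ) → (ℝ × EuclideanSpace ℝ (Fin n) × ℝ) :=
  fun v => (a * v.1 + ⟪Xv, v.2.1⟫, A v.2.1 - v.2.2 • Xv, -(a * v.2.2))

/-- The algebraic curvature tensor `R = R(λ, e, R₀, P, T)` of type `𝔤^{1,𝔥}`, determined by
`R(p,q) = (λ,0,e)`, `R(X,Y) = (0, R₀(X,Y), P(Y)X − P(X)Y)`, `R(X,q) = (g(e,X), P(X), T(X))`,
`R(p,X) = 0` for `X, Y ∈ E = ℝⁿ`, extended bilinearly. -/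
def Rfun (n : ℕ) (lam : ℝ) (ev : EuclideanSpace ℝ (Fin n))
    (R0 : EuclideanSpace ℝ (Fin n) →ₗ[ℝ] EuclideanSpace ℝ (Fin n) →ₗ[ℝ]
      EuclideanSpace ℝ (Fin n) →ₗ[ℝ] EuclideanSpace ℝ (Fin n))
    (P : EuclideanSpace ℝ (Fin n) →ₗ[ℝ]
      EuclideanSpace ℝ (Fin n) →ₗ[ℝ] EuclideanSpace ℝ (Fin n))
    (T : EuclideanSpace ℝ (Fin n) →ₗ[ℝ] EuclideanSpace ℝ (Fin n))
    (U V : ℝ × EuclideanSpace ℝ (Fin n) × ℝ) :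
    (ℝ × EuclideanSpace ℝ (Fin n) × ℝ) → (ℝ × EuclideanSpace ℝ (Fin n) × ℝ) :=
  simMat n
    ((U.1 * V.2.2 - U.2.2 * V.1) * lam + V.2.2 * ⟪ev, U.2.1⟫ - U.2.2 * ⟪ev, V.2.1⟫)
    (R0 U.2.1 V.2.1 + V.2.2 • P U.2.1 - U.2.2 • P V.2.1)
    ((U.1 * V.2.2 - U.2.2 * V.1) • ev + (P V.2.1 U.2.1 - P U.2.1 V.2.1)
      + V.2.2 • T U.2.1 - U.2.2 • T V.2.1)

def bianchiSum {M : Type*} [Add M] (R : M → M → M → M) (U V W : M) : M :=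
  R U V W + R V W U + R W U V

section

variable {n : ℕ} (lam : ℝ) (ev : EuclideanSpace ℝ (Fin n))
  (R0 : EuclideanSpace ℝ (Fin n) →ₗ[ℝ] EuclideanSpace ℝ (Fin n) →ₗ[ℝ]
    EuclideanSpace ℝ (Fin n) →ₗ[ℝ] EuclideanSpace ℝ (Fin n))
  (P : EuclideanSpace ℝ (Fin n) →ₗ[ℝ]
    EuclideanSpace ℝ (Fin n) →ₗ[ℝ] EuclideanSpace ℝ (Fin n))
  (T : EuclideanSpace ℝ (Fin n) →ₗ[ℝ] EuclideanSpace ℝ (Fin n))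

/-- In the `p`-component the `P`-terms cancel by the cyclic identity of `P` and the `T`-terms by
the symmetry of `T`. -/
theorem bianchiSum_Rfun_fst
    (hPcyc : ∀ x y z, ⟪P x y, z⟫ + ⟪P y z, x⟫ + ⟪P z x, y⟫ = 0)
    (hT : ∀ x y, ⟪T x, y⟫ = ⟪x, T y⟫) (U V W : ℝ × EuclideanSpace ℝ (Fin n) × ℝ) :
    (bianchiSum (Rfun n lam ev R0 P T) U V W).1 = 0 := by
  obtain ⟨u1, u, u3⟩ := U
  obtain ⟨v1, v, v3⟩ := V
  obtain ⟨w1, w, w3⟩ := W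
  have hTsymm : ∀ x y, ⟪T x, y⟫ = ⟪T y, x⟫ := fun x y => (hT x y).trans (real_inner_comm _ _)
  simp only [bianchiSum, Rfun, simMat, Prod.fst_add, inner_add_left, inner_sub_left,
    real_inner_smul_left]
  linear_combination hPcyc v u w - hPcyc u v w
    + v3 * hTsymm u w + u3 * hTsymm w v + w3 * hTsymm v u

theorem bianchiSum_Rfun_snd_fst (hR0B : ∀ x y z, R0 x y z + R0 y z x + R0 z x y = 0)
    (U V W : ℝ × EuclideanSpace ℝ (Fin n) × ℝ) :
    (bianchiSum (Rfun n lam ev R0 P T) U V W).2.1 = 0 := by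
  obtain ⟨u1, u, u3⟩ := U
  obtain ⟨v1, v, v3⟩ := V
  obtain ⟨w1, w, w3⟩ := W
  simp only [bianchiSum, Rfun, simMat, Prod.snd_add, Prod.fst_add, LinearMap.add_apply,
    LinearMap.sub_apply, LinearMap.smul_apply]
  linear_combination (norm := module) hR0B u v w

theorem bianchiSum_Rfun_snd_snd (U V W : ℝ × EuclideanSpace ℝ (Fin n) × ℝ) :
    (bianchiSum (Rfun n lam ev R0 P T) U V W).2.2 = 0 := by
  simp only [bianchiSum, Rfun, simMat, Prod.snd_add]
  ring

end

theorem stmt17_general (n : ℕ) (lam : ℝ) (ev : EuclideanSpace ℝ (Fin n))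
    (R0 : EuclideanSpace ℝ (Fin n) →ₗ[ℝ] EuclideanSpace ℝ (Fin n) →ₗ[ℝ]
      EuclideanSpace ℝ (Fin n) →ₗ[ℝ] EuclideanSpace ℝ (Fin n))
    (P : EuclideanSpace ℝ (Fin n) →ₗ[ℝ]
      EuclideanSpace ℝ (Fin n) →ₗ[ℝ] EuclideanSpace ℝ (Fin n))
    (T : EuclideanSpace ℝ (Fin n) →ₗ[ℝ] EuclideanSpace ℝ (Fin n))
    (hR0B : ∀ x y z, R0 x y z + R0 y z x + R0 z x y = 0)
    (hPcyc : ∀ x y z, ⟪P x y, z⟫ + ⟪P y z, x⟫ + ⟪P z x, y⟫ = 0)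
    (hT : ∀ x y, ⟪T x, y⟫ = ⟪x, T y⟫) :
    ∀ U V W : ℝ × EuclideanSpace ℝ (Fin n) × ℝ,
      Rfun n lam ev R0 P T U V W + Rfun n lam ev R0 P T V W U
        + Rfun n lam ev R0 P T W U V = 0 := fun U V W =>
  Prod.ext (bianchiSum_Rfun_fst lam ev R0 P T hPcyc hT U V W) <|
    Prod.ext (bianchiSum_Rfun_snd_fst lam ev R0 P T hR0B U V W)
      (bianchiSum_Rfun_snd_snd lam ev R0 P T U V W)

/-- For `𝔤 = 𝔤^{1,𝔥} = (ℝ ⊕ 𝔥) ⋉ ℝⁿ ⊆ 𝔰𝔦𝔪(n)` and data `λ ∈ ℝ`, `e ∈ ℝⁿ`,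
`R₀ ∈ 𝓡(𝔥)` (skew in its two arguments, values skew-symmetric, first Bianchi identity),
`P ∈ 𝒫(𝔥)` (values skew-symmetric, cyclic identity) and `T` symmetric, the tensor
`R = R(λ,e,R₀,P,T)` defined above satisfies the first Bianchi identity
`R(U,V)W + R(V,W)U + R(W,U)V = 0` for all `U, V, W ∈ ℝ^{1,n+1}`. -/
theorem stmt17 (n : ℕ) (lam : ℝ) (ev : EuclideanSpace ℝ (Fin n))
    (R0 : EuclideanSpace ℝ (Fin n) →ₗ[ℝ] EuclideanSpace ℝ (Fin n) →ₗ[ℝ]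
      EuclideanSpace ℝ (Fin n) →ₗ[ℝ] EuclideanSpace ℝ (Fin n))
    (P : EuclideanSpace ℝ (Fin n) →ₗ[ℝ]
      EuclideanSpace ℝ (Fin n) →ₗ[ℝ] EuclideanSpace ℝ (Fin n))
    (T : EuclideanSpace ℝ (Fin n) →ₗ[ℝ] EuclideanSpace ℝ (Fin n))
    (hR0skew : ∀ x y, R0 x y = -R0 y x)
    (hR0val : ∀ x y z u, ⟪R0 x y z, u⟫ + ⟪z, R0 x y u⟫ = 0)
    (hR0B : ∀ x y z, R0 x y z + R0 y z x + R0 z x y = 0)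
    (hPval : ∀ x y z, ⟪P x y, z⟫ + ⟪y, P x z⟫ = 0)
    (hPcyc : ∀ x y z, ⟪P x y, z⟫ + ⟪P y z, x⟫ + ⟪P z x, y⟫ = 0)
    (hT : ∀ x y, ⟪T x, y⟫ = ⟪x, T y⟫) :
    ∀ U V W : ℝ × EuclideanSpace ℝ (Fin n) × ℝ,
      Rfun n lam ev R0 P T U V W + Rfun n lam ev R0 P T V W U
        + Rfun n lam ev R0 P T W U V = 0 :=
  stmt17_general n lam ev R0 P T hR0B hPcyc hT

end
end

section
/- For the algebraic curvature tensor R = R(λ,e,R₀,P,T) of type 𝔤^{1,𝔥} defined as above, the Ricci tensor Ric(U,V) = tr(Z ↦ R(Z,U)V) satisfies: Ric(p,q) = λ, Ric(X,Y) = Ric(R₀)(X,Y) for X,Y ∈ E, Ric(X,q) = g(X, e − R̃ic(P)), and Ric(q,q) = −tr T. -/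
open scoped RealInnerProductSpace BigOperators

noncomputable section

def pVec (n : ℕ) : ℝ × EuclideanSpace ℝ (Fin n) × ℝ := (1, 0, 0)
def qVec (n : ℕ) : ℝ × EuclideanSpace ℝ (Fin n) × ℝ := (0, 0, 1)
/-- The basis vector `Xᵢ` of `E = ℝⁿ`. -/
def xVec (n : ℕ) (i : Fin n) : ℝ × EuclideanSpace ℝ (Fin n) × ℝ :=
  (0, EuclideanSpace.single i (1 : ℝ), 0)

def lorG (n : ℕ) (u v : ℝ × EuclideanSpace ℝ (Fin n) × ℝ) : ℝ :=
  u.1 * v.2.2 + u.2.2 * v.1 + ⟪u.2.1, v.2.1⟫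

/-- The Ricci tensor `Ric(U,V) = tr (Z ↦ R(Z,U)V)`, computed via the Witt basis
`p, X₁, …, Xₙ, q` whose `g`-dual basis is `q, X₁, …, Xₙ, p`. -/
def RicF (n : ℕ) (lam : ℝ) (ev : EuclideanSpace ℝ (Fin n))
    (R0 : EuclideanSpace ℝ (Fin n) →ₗ[ℝ] EuclideanSpace ℝ (Fin n) →ₗ[ℝ]
      EuclideanSpace ℝ (Fin n) →ₗ[ℝ] EuclideanSpace ℝ (Fin n))
    (P : EuclideanSpace ℝ (Fin n) →ₗ[ℝ]
      EuclideanSpace ℝ (Fin n) →ₗ[ℝ] EuclideanSpace ℝ (Fin n))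
    (T : EuclideanSpace ℝ (Fin n) →ₗ[ℝ] EuclideanSpace ℝ (Fin n))
    (U V : ℝ × EuclideanSpace ℝ (Fin n) × ℝ) : ℝ :=
  lorG n (Rfun n lam ev R0 P T (pVec n) U V) (qVec n)
    + (∑ i, lorG n (Rfun n lam ev R0 P T (xVec n i) U V) (xVec n i))
    + lorG n (Rfun n lam ev R0 P T (qVec n) U V) (pVec n)

/-! Pairing `R(Z,U)V` with the `g`-dual basis `q, X₁, …, Xₙ, p` writes `Ric(U,V)` in terms of
`λ`, `e` and the traces over `E` of `R₀(·,x)y`, `P(·)x`, `P(x)` and `T`. As `P` is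
`𝔰𝔬(E)`-valued, `tr P(x) = 0` and `∑ᵢ g(P(eᵢ)x, eᵢ) = -g(x, R̃ic(P))`, which leaves a closed
formula for `Ric` that specialises to the four identities. -/

section SkewMaps

variable {E : Type*} [NormedAddCommGroup E] [InnerProductSpace ℝ E]

theorem inner_apply_self_eq_zero_of_skew {A : E →ₗ[ℝ] E}
    (hA : ∀ y z, ⟪A y, z⟫ + ⟪y, A z⟫ = 0) (y : E) : ⟪A y, y⟫ = 0 := by
  linarith [hA y y, real_inner_comm y (A y)]

theorem sum_inner_apply_self_eq_zero_of_skew {ι : Type*} [Fintype ι] {A : E →ₗ[ℝ] E}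
    (hA : ∀ y z, ⟪A y, z⟫ + ⟪y, A z⟫ = 0) (v : ι → E) : ∑ i, ⟪A (v i), v i⟫ = 0 :=
  Finset.sum_eq_zero fun i _ => inner_apply_self_eq_zero_of_skew hA (v i)

theorem sum_inner_apply_eq_neg_inner_sum {ι : Type*} [Fintype ι] {P : E →ₗ[ℝ] E →ₗ[ℝ] E}
    (hP : ∀ x y z, ⟪P x y, z⟫ + ⟪y, P x z⟫ = 0) (v : ι → E) (x : E) :
    ∑ i, ⟪P (v i) x, v i⟫ = -⟪x, ∑ i, P (v i) (v i)⟫ := by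
  rw [inner_sum, ← Finset.sum_neg_distrib]
  exact Finset.sum_congr rfl fun i _ => eq_neg_of_add_eq_zero_left (hP (v i) x (v i))

end SkewMaps

section Ricci

variable {n : ℕ} (lam : ℝ) (ev : EuclideanSpace ℝ (Fin n))
    (R0 : EuclideanSpace ℝ (Fin n) →ₗ[ℝ] EuclideanSpace ℝ (Fin n) →ₗ[ℝ]
      EuclideanSpace ℝ (Fin n) →ₗ[ℝ] EuclideanSpace ℝ (Fin n))
    (P : EuclideanSpace ℝ (Fin n) →ₗ[ℝ]
      EuclideanSpace ℝ (Fin n) →ₗ[ℝ] EuclideanSpace ℝ (Fin n))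
    (T : EuclideanSpace ℝ (Fin n) →ₗ[ℝ] EuclideanSpace ℝ (Fin n))

local notation "𝐞" i:max => EuclideanSpace.single i (1 : ℝ)

theorem RicF_eq (U V : ℝ × EuclideanSpace ℝ (Fin n) × ℝ) :
    RicF n lam ev R0 P T U V =
      (U.1 * V.2.2 + U.2.2 * V.1) * lam + U.2.2 * ⟪ev, V.2.1⟫ + V.2.2 * ⟪ev, U.2.1⟫
        + ∑ i, ⟪R0 (𝐞 i) U.2.1 V.2.1, 𝐞 i⟫
        + U.2.2 * ∑ i, ⟪P (𝐞 i) V.2.1, 𝐞 i⟫ + V.2.2 * ∑ i, ⟪P (𝐞 i) U.2.1, 𝐞 i⟫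
        - V.2.2 * ∑ i, ⟪P U.2.1 (𝐞 i), 𝐞 i⟫ - U.2.2 * V.2.2 * ∑ i, ⟪T (𝐞 i), 𝐞 i⟫ := by
  simp [RicF, Rfun, simMat, lorG, pVec, qVec, xVec, inner_add_left, inner_sub_left,
    inner_smul_left, mul_sub, Finset.sum_add_distrib, Finset.sum_sub_distrib,
    ← Finset.mul_sum]
  ring

theorem RicF_eq_of_skew (hP : ∀ x y z, ⟪P x y, z⟫ + ⟪y, P x z⟫ = 0)
    (U V : ℝ × EuclideanSpace ℝ (Fin n) × ℝ) :
    RicF n lam ev R0 P T U V =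
      (U.1 * V.2.2 + U.2.2 * V.1) * lam
        + U.2.2 * ⟪V.2.1, ev - ∑ i, P (𝐞 i) (𝐞 i)⟫
        + V.2.2 * ⟪U.2.1, ev - ∑ i, P (𝐞 i) (𝐞 i)⟫
        + ∑ i, ⟪R0 (𝐞 i) U.2.1 V.2.1, 𝐞 i⟫
        - U.2.2 * V.2.2 * ∑ i, ⟪T (𝐞 i), 𝐞 i⟫ := by
  rw [RicF_eq, sum_inner_apply_eq_neg_inner_sum hP, sum_inner_apply_eq_neg_inner_sum hP,
    sum_inner_apply_self_eq_zero_of_skew (hP U.2.1), inner_sub_right, inner_sub_right,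
    real_inner_comm ev V.2.1, real_inner_comm ev U.2.1]
  ring

end Ricci

theorem stmt18_general (n : ℕ) (lam : ℝ) (ev : EuclideanSpace ℝ (Fin n))
    (R0 : EuclideanSpace ℝ (Fin n) →ₗ[ℝ] EuclideanSpace ℝ (Fin n) →ₗ[ℝ]
      EuclideanSpace ℝ (Fin n) →ₗ[ℝ] EuclideanSpace ℝ (Fin n))
    (P : EuclideanSpace ℝ (Fin n) →ₗ[ℝ]
      EuclideanSpace ℝ (Fin n) →ₗ[ℝ] EuclideanSpace ℝ (Fin n))
    (T : EuclideanSpace ℝ (Fin n) →ₗ[ℝ] EuclideanSpace ℝ (Fin n))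
    (hPval : ∀ x y z, ⟪P x y, z⟫ + ⟪y, P x z⟫ = 0) :
    RicF n lam ev R0 P T (pVec n) (qVec n) = lam ∧
    (∀ x y : EuclideanSpace ℝ (Fin n),
      RicF n lam ev R0 P T (0, x, 0) (0, y, 0)
        = ∑ i, ⟪R0 (EuclideanSpace.single i (1 : ℝ)) x y, EuclideanSpace.single i (1 : ℝ)⟫) ∧
    (∀ x : EuclideanSpace ℝ (Fin n),
      RicF n lam ev R0 P T (0, x, 0) (qVec n)
        = ⟪x, ev - ∑ i, P (EuclideanSpace.single i (1 : ℝ)) (EuclideanSpace.single i (1 : ℝ))⟫) ∧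
    RicF n lam ev R0 P T (qVec n) (qVec n)
      = -∑ i, ⟪T (EuclideanSpace.single i (1 : ℝ)), EuclideanSpace.single i (1 : ℝ)⟫ := by
  simp only [RicF_eq_of_skew lam ev R0 P T hPval, pVec, qVec]
  refine ⟨by simp, fun x y => by simp, fun x => by simp, by simp⟩

/-- For the algebraic curvature tensor `R = R(λ,e,R₀,P,T)` of type
`𝔤^{1,𝔥}`, the Ricci tensor `Ric(U,V) = tr(Z ↦ R(Z,U)V)` satisfies `Ric(p,q) = λ`,
`Ric(X,Y) = Ric(R₀)(X,Y)` for `X, Y ∈ E`, `Ric(X,q) = g(X, e − R̃ic(P))` and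
`Ric(q,q) = −tr T`. -/
theorem stmt18 (n : ℕ) (lam : ℝ) (ev : EuclideanSpace ℝ (Fin n))
    (R0 : EuclideanSpace ℝ (Fin n) →ₗ[ℝ] EuclideanSpace ℝ (Fin n) →ₗ[ℝ]
      EuclideanSpace ℝ (Fin n) →ₗ[ℝ] EuclideanSpace ℝ (Fin n))
    (P : EuclideanSpace ℝ (Fin n) →ₗ[ℝ]
      EuclideanSpace ℝ (Fin n) →ₗ[ℝ] EuclideanSpace ℝ (Fin n))
    (T : EuclideanSpace ℝ (Fin n) →ₗ[ℝ] EuclideanSpace ℝ (Fin n))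
    (hR0skew : ∀ x y, R0 x y = -R0 y x)
    (hR0val : ∀ x y z u, ⟪R0 x y z, u⟫ + ⟪z, R0 x y u⟫ = 0)
    (hR0B : ∀ x y z, R0 x y z + R0 y z x + R0 z x y = 0)
    (hPval : ∀ x y z, ⟪P x y, z⟫ + ⟪y, P x z⟫ = 0)
    (hPcyc : ∀ x y z, ⟪P x y, z⟫ + ⟪P y z, x⟫ + ⟪P z x, y⟫ = 0)
    (hT : ∀ x y, ⟪T x, y⟫ = ⟪x, T y⟫) :
    RicF n lam ev R0 P T (pVec n) (qVec n) = lam ∧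
    (∀ x y : EuclideanSpace ℝ (Fin n),
      RicF n lam ev R0 P T (0, x, 0) (0, y, 0)
        = ∑ i, ⟪R0 (EuclideanSpace.single i (1 : ℝ)) x y, EuclideanSpace.single i (1 : ℝ)⟫) ∧
    (∀ x : EuclideanSpace ℝ (Fin n),
      RicF n lam ev R0 P T (0, x, 0) (qVec n)
        = ⟪x, ev - ∑ i, P (EuclideanSpace.single i (1 : ℝ)) (EuclideanSpace.single i (1 : ℝ))⟫) ∧
    RicF n lam ev R0 P T (qVec n) (qVec n)
      = -∑ i, ⟪T (EuclideanSpace.single i (1 : ℝ)), EuclideanSpace.single i (1 : ℝ)⟫ :=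
  stmt18_general n lam ev R0 P T hPval
end
end

section
/- Under the change of basis p' = μp (μ ≠ 0), q' = (1/μ)(−(1/2)g(w,w)p + w + q), E' = {x' = −g(x,w)p + x | x ∈ E}, the components of an algebraic curvature tensor R = R(λ,e,R₀,P,T) of type 𝔤^{1,𝔥} transform as: λ̃ = λ, ẽ = (1/μ)(e − λw)', P̃(x') = (1/μ)(P(x) + R₀(x,w))', and R̃₀(x',y')z' = (R₀(x,y)z)'. In particular, if λ = 0 then ẽ = (1/μ)e', so the class of e modulo positive rescaling and the identification E ≅ E' is determined up to a nonzero real multiple. -/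
open scoped RealInnerProductSpace BigOperators

noncomputable section

/-! The two `p`-terms of `q'` drop out of `R(p',q') = R(p,q)` because `R(p,·)` vanishes on `p` and
on `E`, so `λ̃` and `ẽ` are read off from `R(p,q) = (λ,0,e)` alone. Every value `v` of `R` on `E'`
lies in `p^⊥`, and removing its `p'`-component `g(v,q')·p'` leaves `x'`, where `x` is the
`E`-component of `v`. For `v = R(U,V)z'` that component is the `𝔰𝔬(E)`-part of `R(U,V)` applied
to `z`, which is `(1/μ)(P(x) + R₀(x,w))` for `R(x',q')` and `R₀(x,y)` for `R(x',y')`. -/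

section WittBasisChange

variable {n : ℕ} (μ : ℝ) (w : EuclideanSpace ℝ (Fin n))

def primedP : ℝ × EuclideanSpace ℝ (Fin n) × ℝ := (μ, 0, 0)

def primedQ : ℝ × EuclideanSpace ℝ (Fin n) × ℝ := μ⁻¹ • (-(1 / 2) * ⟪w, w⟫, w, 1)

def primed (x : EuclideanSpace ℝ (Fin n)) : ℝ × EuclideanSpace ℝ (Fin n) × ℝ := (-⟪x, w⟫, x, 0)

variable {μ}

theorem sub_lorG_primedQ_smul_primedP (hμ : μ ≠ 0) (v : ℝ × EuclideanSpace ℝ (Fin n) × ℝ)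
    (hv : v.2.2 = 0) : v - lorG n v (primedQ μ w) • primedP μ = primed w v.2.1 := by
  obtain ⟨a, x, c⟩ := v
  obtain rfl : c = 0 := hv
  simp only [lorG, primedQ, primedP, primed, Prod.smul_mk, Prod.mk_sub_mk, smul_eq_mul,
    inner_smul_right, mul_zero, smul_zero, sub_zero]
  congr 1
  field_simp
  ring

theorem simMat_primed_sub_lorG_smul (hμ : μ ≠ 0) (a : ℝ)
    (A : EuclideanSpace ℝ (Fin n) →ₗ[ℝ] EuclideanSpace ℝ (Fin n))
    (X y : EuclideanSpace ℝ (Fin n)) :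
    simMat n a A X (primed w y) - lorG n (simMat n a A X (primed w y)) (primedQ μ w) • primedP μ
      = primed w (A y) := by
  rw [sub_lorG_primedQ_smul_primedP w hμ _ (by simp [simMat, primed])]
  simp [simMat, primed]

theorem lorG_simMat_primedP_primedQ (hμ : μ ≠ 0) (a : ℝ)
    (A : EuclideanSpace ℝ (Fin n) →ₗ[ℝ] EuclideanSpace ℝ (Fin n)) (X : EuclideanSpace ℝ (Fin n)) :
    lorG n (simMat n a A X (primedP μ)) (primedQ μ w) = a := by
  simp [lorG, simMat, primedP, primedQ, hμ]

variable (lam : ℝ) (ev : EuclideanSpace ℝ (Fin n))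
  (R0 : EuclideanSpace ℝ (Fin n) →ₗ[ℝ] EuclideanSpace ℝ (Fin n) →ₗ[ℝ]
    EuclideanSpace ℝ (Fin n) →ₗ[ℝ] EuclideanSpace ℝ (Fin n))
  (P : EuclideanSpace ℝ (Fin n) →ₗ[ℝ]
    EuclideanSpace ℝ (Fin n) →ₗ[ℝ] EuclideanSpace ℝ (Fin n))
  (T : EuclideanSpace ℝ (Fin n) →ₗ[ℝ] EuclideanSpace ℝ (Fin n))

theorem Rfun_primedP_primedQ (hμ : μ ≠ 0) :
    Rfun n lam ev R0 P T (primedP μ) (primedQ μ w) = simMat n lam 0 ev := by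
  simp [Rfun, primedP, primedQ, hμ]

theorem neg_simMat_primedQ_sub_smul :
    -simMat n lam 0 ev (primedQ μ w) - lam • primedQ μ w = primed w (μ⁻¹ • (ev - lam • w)) := by
  simp only [simMat, primedQ, primed, Prod.smul_mk, Prod.neg_mk, Prod.mk_sub_mk, smul_eq_mul,
    real_inner_smul_left, real_inner_smul_right, inner_sub_left, real_inner_comm w ev,
    LinearMap.zero_apply, Prod.mk.injEq]
  refine ⟨by ring, by module, by ring⟩

theorem Rfun_primed_sub_lorG_smul (hμ : μ ≠ 0) (U V : ℝ × EuclideanSpace ℝ (Fin n) × ℝ)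
    (y : EuclideanSpace ℝ (Fin n)) :
    Rfun n lam ev R0 P T U V (primed w y)
        - lorG n (Rfun n lam ev R0 P T U V (primed w y)) (primedQ μ w) • primedP μ
      = primed w ((R0 U.2.1 V.2.1 + V.2.2 • P U.2.1 - U.2.2 • P V.2.1) y) :=
  simMat_primed_sub_lorG_smul w hμ _ _ _ y

end WittBasisChange

/-- Under the change of Witt basis `p' = μ·p`,
`q' = (1/μ)(−(1/2)g(w,w)·p + w + q)`, `E' = {x' = −g(x,w)·p + x | x ∈ E}`, the components of
`R = R(λ,e,R₀,P,T)` transform as `λ̃ = λ`, `ẽ = (1/μ)(e − λ·w)'`,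
`P̃(x')y' = ((1/μ)(P(x) + R₀(x,w))y)'`, `R̃₀(x',y')z' = (R₀(x,y)z)'`.  (Here `λ̃` is read off
from `g(R(p',q')p', q')`, `ẽ = −R(p',q')q' − λ̃·q'`, and `P̃(x')y'`, `R̃₀(x',y')z'` are the
`E'`-components, i.e. the values of `R` with the `p'`-component `g(·,q')·p'` removed.)
In particular, if `λ = 0` then `ẽ = (1/μ)·e'`, so the projection of `e` to `p^⊥/ℝp` is
defined up to a nonzero real multiple. -/
theorem stmt19 (n : ℕ) (lam : ℝ) (ev : EuclideanSpace ℝ (Fin n))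
    (R0 : EuclideanSpace ℝ (Fin n) →ₗ[ℝ] EuclideanSpace ℝ (Fin n) →ₗ[ℝ]
      EuclideanSpace ℝ (Fin n) →ₗ[ℝ] EuclideanSpace ℝ (Fin n))
    (P : EuclideanSpace ℝ (Fin n) →ₗ[ℝ]
      EuclideanSpace ℝ (Fin n) →ₗ[ℝ] EuclideanSpace ℝ (Fin n))
    (T : EuclideanSpace ℝ (Fin n) →ₗ[ℝ] EuclideanSpace ℝ (Fin n))
    (μ : ℝ) (hμ : μ ≠ 0) (w : EuclideanSpace ℝ (Fin n))
    (p' q' : ℝ × EuclideanSpace ℝ (Fin n) × ℝ)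
    (hp' : p' = ((μ : ℝ), (0 : EuclideanSpace ℝ (Fin n)), (0 : ℝ)))
    (hq' : q' = μ⁻¹ • (((-(1 / 2) * ⟪w, w⟫ : ℝ), w, (1 : ℝ))))
    (prm : EuclideanSpace ℝ (Fin n) → ℝ × EuclideanSpace ℝ (Fin n) × ℝ)
    (hprm : ∀ x, prm x = ((-⟪x, w⟫ : ℝ), x, (0 : ℝ))) :
    -- λ̃ = λ
    lorG n (Rfun n lam ev R0 P T p' q' p') q' = lam ∧
    -- ẽ = (1/μ)(e − λw)'
    -(Rfun n lam ev R0 P T p' q' q') - lam • q' = prm (μ⁻¹ • (ev - lam • w)) ∧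
    -- P̃(x') = (1/μ)(P(x) + R₀(x,w))'
    (∀ x y : EuclideanSpace ℝ (Fin n),
      Rfun n lam ev R0 P T (prm x) q' (prm y)
          - (lorG n (Rfun n lam ev R0 P T (prm x) q' (prm y)) q') • p'
        = prm (μ⁻¹ • (P x y + R0 x w y))) ∧
    -- R̃₀(x',y')z' = (R₀(x,y)z)'
    (∀ x y z : EuclideanSpace ℝ (Fin n),
      Rfun n lam ev R0 P T (prm x) (prm y) (prm z)
          - (lorG n (Rfun n lam ev R0 P T (prm x) (prm y) (prm z)) q') • p'
        = prm (R0 x y z)) ∧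
    -- in particular, λ = 0 → ẽ = (1/μ)·e'
    (lam = 0 → -(Rfun n lam ev R0 P T p' q' q') = prm (μ⁻¹ • ev)) := by
  obtain rfl : p' = primedP μ := hp'
  obtain rfl : q' = primedQ μ w := hq'
  obtain rfl : prm = primed w := funext hprm
  have e_transform := neg_simMat_primedQ_sub_smul (μ := μ) w lam ev
  rw [Rfun_primedP_primedQ w lam ev R0 P T hμ]
  refine ⟨lorG_simMat_primedP_primedQ w hμ lam 0 ev, e_transform, fun x y => ?_, fun x y z => ?_,
    fun hlam => ?_⟩
  · rw [Rfun_primed_sub_lorG_smul w lam ev R0 P T hμ]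
    simp [primed, primedQ, smul_add, add_comm]
  · rw [Rfun_primed_sub_lorG_smul w lam ev R0 P T hμ]
    simp [primed]
  · simpa [hlam] using e_transform
end
end
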